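/- arXiv:1711.09574 — 3 statements merged into one kernel-verified Lean document; each statement's English description precedes it below -/
import Mathlib

section
/- There exists a unique F-algebra antiautomorphism 𝒮 of the Racah algebra ℜ sending A ↦ B, B ↦ A, C ↦ C, D ↦ D. Moreover 𝒮 sends α ↦ −β, β ↦ −α, γ ↦ −γ, δ ↦ δ, and 𝒮² = id. -/
noncomputable section

/-- Generators of the Racah algebra. -/
inductive RGen : Type
  | A | B | C | D

namespace Racah

variable (F : Type) [Field F]

/-- The free algebra on the generators `A`, `B`, `C`, `D`. -/
abbrev FA := FreeAlgebra F RGen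

def fA : FA F := FreeAlgebra.ι F RGen.A
def fB : FA F := FreeAlgebra.ι F RGen.B
def fC : FA F := FreeAlgebra.ι F RGen.C
def fD : FA F := FreeAlgebra.ι F RGen.D

/-- α = [A,D] + AC − BA in the free algebra. -/
def fAl : FA F := (fA F * fD F - fD F * fA F) + fA F * fC F - fB F * fA F
/-- β = [B,D] + BA − CB in the free algebra. -/
def fBe : FA F := (fB F * fD F - fD F * fB F) + fB F * fA F - fC F * fB F
/-- γ = [C,D] + CB − AC in the free algebra. -/
def fGa : FA F := (fC F * fD F - fD F * fC F) + fC F * fB F - fA F * fC F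

/-- The defining relations of the Racah algebra:
`[A,B] = [B,C] = [C,A] = 2D` and each of `α`, `β`, `γ` commutes with each of `A`, `B`, `C`, `D`. -/
inductive Rel : FA F → FA F → Prop
  | AB : Rel (fA F * fB F - fB F * fA F) (2 * fD F)
  | BC : Rel (fB F * fC F - fC F * fB F) (2 * fD F)
  | CA : Rel (fC F * fA F - fA F * fC F) (2 * fD F)
  | cen (c x : FA F) (hc : c = fAl F ∨ c = fBe F ∨ c = fGa F)
      (hx : x = fA F ∨ x = fB F ∨ x = fC F ∨ x = fD F) :
      Rel (c * x) (x * c)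

/-- The Racah algebra ℜ. -/
abbrev R := RingQuot (Rel F)

def A : R F := RingQuot.mkAlgHom F (Rel F) (fA F)
def B : R F := RingQuot.mkAlgHom F (Rel F) (fB F)
def C : R F := RingQuot.mkAlgHom F (Rel F) (fC F)
def D : R F := RingQuot.mkAlgHom F (Rel F) (fD F)

/-- α = [A,D] + AC − BA. -/
def al : R F := (A F * D F - D F * A F) + A F * C F - B F * A F
/-- β = [B,D] + BA − CB. -/
def be : R F := (B F * D F - D F * B F) + B F * A F - C F * B F
/-- γ = [C,D] + CB − AC. -/
def ga : R F := (C F * D F - D F * C F) + C F * B F - A F * C F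
/-- δ = A + B + C. -/
def de : R F := A F + B F + C F

end Racah

namespace Racah

/-- An F-algebra antiautomorphism of ℜ: an F-linear bijection `f` with `f 1 = 1`
and `f (x*y) = f y * f x` for all `x`, `y`. -/
def IsAntiAut (F : Type) [Field F] (f : R F ≃ₗ[F] R F) : Prop :=
  f 1 = 1 ∧ ∀ x y : R F, f (x * y) = f y * f x

end Racah

namespace Racah

variable (F : Type) [Field F]

open MulOpposite

local notation "mk" => RingQuot.mkAlgHom F (Rel F)

lemma mk_al : mk (fAl F) = al F := by
  simp [fAl, al, A, B, C, D, map_sub, map_add, map_mul]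

lemma mk_be : mk (fBe F) = be F := by
  simp [fBe, be, A, B, C, D, map_sub, map_add, map_mul]

lemma mk_ga : mk (fGa F) = ga F := by
  simp [fGa, ga, A, B, C, D, map_sub, map_add, map_mul]

/-- centrality of α, β, γ in ℜ. -/
lemma cent (c x : R F) (hc : c = al F ∨ c = be F ∨ c = ga F)
    (hx : x = A F ∨ x = B F ∨ x = C F ∨ x = D F) : c * x = x * c := by
  obtain ⟨c', hc'⟩ : ∃ c', mk c' = c ∧ (c' = fAl F ∨ c' = fBe F ∨ c' = fGa F) := by
    rcases hc with h | h | h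
    · exact ⟨fAl F, by rw [mk_al, h], Or.inl rfl⟩
    · exact ⟨fBe F, by rw [mk_be, h], Or.inr (Or.inl rfl)⟩
    · exact ⟨fGa F, by rw [mk_ga, h], Or.inr (Or.inr rfl)⟩
  obtain ⟨x', hx'⟩ : ∃ x', mk x' = x ∧
      (x' = fA F ∨ x' = fB F ∨ x' = fC F ∨ x' = fD F) := by
    rcases hx with h | h | h | h
    · exact ⟨fA F, h ▸ rfl, Or.inl rfl⟩
    · exact ⟨fB F, h ▸ rfl, Or.inr (Or.inl rfl)⟩
    · exact ⟨fC F, h ▸ rfl, Or.inr (Or.inr (Or.inl rfl))⟩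
    · exact ⟨fD F, h ▸ rfl, Or.inr (Or.inr (Or.inr rfl))⟩
  have := RingQuot.mkAlgHom_rel (S := F) (Rel.cen c' x' hc'.2 hx'.2)
  rw [map_mul, map_mul, hc'.1, hx'.1] at this
  exact this

lemma relAB : A F * B F - B F * A F = 2 * D F := by
  have := RingQuot.mkAlgHom_rel (S := F) (Rel.AB (F := F))
  simpa [A, B, D, map_sub, map_mul, map_ofNat] using this

lemma relBC : B F * C F - C F * B F = 2 * D F := by
  have := RingQuot.mkAlgHom_rel (S := F) (Rel.BC (F := F))
  simpa [B, C, D, map_sub, map_mul, map_ofNat] using this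

lemma relCA : C F * A F - A F * C F = 2 * D F := by
  have := RingQuot.mkAlgHom_rel (S := F) (Rel.CA (F := F))
  simpa [A, C, D, map_sub, map_mul, map_ofNat] using this

/-- images of generators under the antiautomorphism, in the opposite algebra. -/
def gImg : RGen → (R F)ᵐᵒᵖ
  | .A => op (B F)
  | .B => op (A F)
  | .C => op (C F)
  | .D => op (D F)

def phi : FA F →ₐ[F] (R F)ᵐᵒᵖ := FreeAlgebra.lift F (gImg F)

lemma phi_A : phi F (fA F) = op (B F) := by simp [phi, fA, gImg]
lemma phi_B : phi F (fB F) = op (A F) := by simp [phi, fB, gImg]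
lemma phi_C : phi F (fC F) = op (C F) := by simp [phi, fC, gImg]
lemma phi_D : phi F (fD F) = op (D F) := by simp [phi, fD, gImg]

lemma phi_al : phi F (fAl F) = op (-be F) := by
  apply unop_injective
  simp only [fAl, map_sub, map_add, map_mul, phi_A, phi_B, phi_C, phi_D,
    unop_sub, unop_add, unop_mul, unop_op, unop_neg, be]
  noncomm_ring

lemma phi_be : phi F (fBe F) = op (-al F) := by
  apply unop_injective
  simp only [fBe, map_sub, map_add, map_mul, phi_A, phi_B, phi_C, phi_D,
    unop_sub, unop_add, unop_mul, unop_op, unop_neg, al]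
  noncomm_ring

lemma phi_ga : phi F (fGa F) = op (-ga F) := by
  apply unop_injective
  simp only [fGa, map_sub, map_add, map_mul, phi_A, phi_B, phi_C, phi_D,
    unop_sub, unop_add, unop_mul, unop_op, unop_neg, ga]
  noncomm_ring

lemma phi_rel : ∀ ⦃x y : FA F⦄, Rel F x y → phi F x = phi F y := by
  intro x y h
  induction h with
  | AB =>
      apply unop_injective
      simp only [map_sub, map_mul, map_ofNat, phi_A, phi_B, phi_D,
        unop_sub, unop_mul, unop_op, unop_ofNat]
      rw [relAB]; noncomm_ring
  | BC =>
      apply unop_injective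
      simp only [map_sub, map_mul, map_ofNat, phi_B, phi_C, phi_D,
        unop_sub, unop_mul, unop_op, unop_ofNat]
      rw [relCA]; noncomm_ring
  | CA =>
      apply unop_injective
      simp only [map_sub, map_mul, map_ofNat, phi_A, phi_C, phi_D,
        unop_sub, unop_mul, unop_op, unop_ofNat]
      rw [relBC]; noncomm_ring
  | cen c x hc hx =>
      apply unop_injective
      simp only [map_mul, unop_mul]
      have hxg : unop (phi F x) = A F ∨ unop (phi F x) = B F ∨
          unop (phi F x) = C F ∨ unop (phi F x) = D F := by
        rcases hx with h | h | h | h <;> subst h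
        · rw [phi_A, unop_op]; tauto
        · rw [phi_B, unop_op]; tauto
        · rw [phi_C, unop_op]; tauto
        · rw [phi_D, unop_op]; tauto
      have hcc : unop (phi F c) * unop (phi F x) = unop (phi F x) * unop (phi F c) := by
        rcases hc with h | h | h <;> subst h
        · rw [phi_al, unop_op]
          exact (Commute.neg_left (cent F (be F) _ (Or.inr (Or.inl rfl)) hxg)).eq
        · rw [phi_be, unop_op]
          exact (Commute.neg_left (cent F (al F) _ (Or.inl rfl) hxg)).eq
        · rw [phi_ga, unop_op]
          exact (Commute.neg_left (cent F (ga F) _ (Or.inr (Or.inr rfl)) hxg)).eq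
      exact hcc.symm

end Racah
namespace Racah

variable (F : Type) [Field F]

open MulOpposite

def psi : R F →ₐ[F] (R F)ᵐᵒᵖ :=
  RingQuot.liftAlgHom F ⟨phi F, fun _ _ h => phi_rel F h⟩

def S0 : R F →ₗ[F] R F :=
  (opLinearEquiv F).symm.toLinearMap.comp (psi F).toLinearMap

lemma S0_apply (x : R F) : S0 F x = unop (psi F x) := rfl

lemma S0_mul (x y : R F) : S0 F (x * y) = S0 F y * S0 F x := by
  simp [S0_apply, map_mul]

lemma S0_one : S0 F 1 = 1 := by
  simp [S0_apply, map_one]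

lemma psi_mk (x : FA F) : psi F (RingQuot.mkAlgHom F (Rel F) x) = phi F x :=
  RingQuot.liftAlgHom_mkAlgHom_apply F (phi F) _ x

lemma S0_A : S0 F (A F) = B F := by
  show unop (psi F (RingQuot.mkAlgHom F (Rel F) (fA F))) = B F
  rw [psi_mk, phi_A, unop_op]

lemma S0_B : S0 F (B F) = A F := by
  show unop (psi F (RingQuot.mkAlgHom F (Rel F) (fB F))) = A F
  rw [psi_mk, phi_B, unop_op]

lemma S0_C : S0 F (C F) = C F := by
  show unop (psi F (RingQuot.mkAlgHom F (Rel F) (fC F))) = C F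
  rw [psi_mk, phi_C, unop_op]

lemma S0_D : S0 F (D F) = D F := by
  show unop (psi F (RingQuot.mkAlgHom F (Rel F) (fD F))) = D F
  rw [psi_mk, phi_D, unop_op]

/-- composite of two antimultiplicative linear maps fixing the generators is the identity. -/
lemma comp_id (S T : R F →ₗ[F] R F) (hS1 : S 1 = 1)
    (hSm : ∀ x y, S (x * y) = S y * S x)
    (hT1 : T 1 = 1) (hTm : ∀ x y, T (x * y) = T y * T x)
    (hA : T (S (A F)) = A F) (hB : T (S (B F)) = B F)
    (hC : T (S (C F)) = C F) (hD : T (S (D F)) = D F) :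
    ∀ x, T (S x) = x := by
  intro x
  obtain ⟨y, rfl⟩ := RingQuot.mkAlgHom_surjective F (Rel F) x
  induction y using FreeAlgebra.induction with
  | grade0 r =>
      rw [AlgHom.commutes, Algebra.algebraMap_eq_smul_one, map_smul, hS1,
        map_smul, hT1]
  | grade1 g =>
      cases g with
      | A => exact hA
      | B => exact hB
      | C => exact hC
      | D => exact hD
  | mul a b iha ihb =>
      rw [map_mul, hSm, hTm, iha, ihb]
  | add a b iha ihb =>
      rw [map_add, map_add, map_add, iha, ihb]

/-- two antimultiplicative linear maps agreeing on the generators are equal. -/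
lemma ext_gen (S T : R F →ₗ[F] R F) (hS1 : S 1 = 1)
    (hSm : ∀ x y, S (x * y) = S y * S x)
    (hT1 : T 1 = 1) (hTm : ∀ x y, T (x * y) = T y * T x)
    (hA : S (A F) = T (A F)) (hB : S (B F) = T (B F))
    (hC : S (C F) = T (C F)) (hD : S (D F) = T (D F)) :
    ∀ x, S x = T x := by
  intro x
  obtain ⟨y, rfl⟩ := RingQuot.mkAlgHom_surjective F (Rel F) x
  induction y using FreeAlgebra.induction with
  | grade0 r =>
      rw [AlgHom.commutes, Algebra.algebraMap_eq_smul_one, map_smul, hS1,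
        map_smul, hT1]
  | grade1 g =>
      cases g with
      | A => exact hA
      | B => exact hB
      | C => exact hC
      | D => exact hD
  | mul a b iha ihb =>
      rw [map_mul, hSm, hTm, iha, ihb]
  | add a b iha ihb =>
      rw [map_add, map_add, map_add, iha, ihb]

end Racah
open Racah in
/-- there is a unique antiautomorphism 𝒮 of ℜ with A ↦ B, B ↦ A, C ↦ C, D ↦ D;
moreover 𝒮 sends α ↦ −β, β ↦ −α, γ ↦ −γ, δ ↦ δ, and 𝒮² = id. -/
theorem stmt3 (F : Type) [Field F] (h2 : (2 : F) ≠ 0) :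
    (∃! S : Racah.R F ≃ₗ[F] Racah.R F, IsAntiAut F S ∧
      S (Racah.A F) = Racah.B F ∧ S (Racah.B F) = Racah.A F ∧
      S (Racah.C F) = Racah.C F ∧ S (Racah.D F) = Racah.D F) ∧
    (∀ S : Racah.R F ≃ₗ[F] Racah.R F, (IsAntiAut F S ∧
      S (Racah.A F) = Racah.B F ∧ S (Racah.B F) = Racah.A F ∧
      S (Racah.C F) = Racah.C F ∧ S (Racah.D F) = Racah.D F) →
      S (al F) = -be F ∧ S (be F) = -al F ∧ S (ga F) = -ga F ∧ S (de F) = de F ∧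
      ∀ x : Racah.R F, S (S x) = x) := by
  have hinv : Function.Involutive (S0 F) :=
    comp_id F (S0 F) (S0 F) (S0_one F) (S0_mul F) (S0_one F) (S0_mul F)
      (by rw [S0_A, S0_B]) (by rw [S0_B, S0_A]) (by rw [S0_C, S0_C])
      (by rw [S0_D, S0_D])
  constructor
  · refine ⟨LinearEquiv.ofInvolutive (S0 F) hinv,
      ⟨⟨S0_one F, S0_mul F⟩, S0_A F, S0_B F, S0_C F, S0_D F⟩, ?_⟩
    intro S' hS'
    apply LinearEquiv.ext
    intro x
    exact ext_gen F S' (LinearEquiv.ofInvolutive (S0 F) hinv)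
      hS'.1.1 hS'.1.2 (S0_one F) (S0_mul F)
      (hS'.2.1.trans (S0_A F).symm) (hS'.2.2.1.trans (S0_B F).symm)
      (hS'.2.2.2.1.trans (S0_C F).symm) (hS'.2.2.2.2.trans (S0_D F).symm) x
  · rintro S ⟨⟨h1, hm⟩, hA, hB, hC, hD⟩
    refine ⟨?_, ?_, ?_, ?_, ?_⟩
    · simp only [al, be, map_sub, map_add, hm, hA, hB, hC, hD]
      noncomm_ring
    · simp only [be, al, map_sub, map_add, hm, hA, hB, hC, hD]
      noncomm_ring
    · simp only [ga, map_sub, map_add, hm, hA, hB, hC, hD]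
      noncomm_ring
    · simp only [de, map_add, hA, hB, hC]
      abel
    · exact comp_id F S S h1 hm h1 hm
        (by show S (S (A F)) = A F; rw [hA, hB])
        (by show S (S (B F)) = B F; rw [hB, hA])
        (by show S (S (C F)) = C F; rw [hC, hC])
        (by show S (S (D F)) = D F; rw [hD, hD])
end
end

section
/- Let 𝒮 and 𝒯 be the F-algebra antiautomorphisms of the Racah algebra ℜ with 𝒮: A ↦ B, B ↦ A, C ↦ C, D ↦ D and 𝒯: A ↦ B, B ↦ C, C ↦ A. Then the group homomorphism from the dihedral group D₆ of order 12 to the group of F-linear bijections of ℜ determined by σ ↦ 𝒮 and τ ↦ 𝒯 (well-defined since 𝒮² = id, 𝒯⁶ = id, (𝒮𝒯)² = id) is injective; equivalently, 𝒯 has order exactly 6. -/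
noncomputable section

/-!
The assignment `A ↦ 2E₀₁`, `B ↦ E₁₂`, `C ↦ -2E₀₁ - E₁₂`, `D ↦ E₀₂` respects the relations of ℜ,
and in this representation `A ≠ C` and `AB ≠ BA` (as `2 ≠ 0`). Since `𝒯` cycles `A → B → C` and
reverses products, `𝒯²A = C` and `𝒯³(AB) = BA`; together with `𝒯⁶ = 1` this gives order exactly 6.
A homomorphism out of `D_n`, `n > 2`, that is injective on the rotations is injective: if `sr i`
were in its kernel, so would be its conjugate `sr (i - 2)` by `r 1`, and hence `r 2`.
-/

lemma orderOf_eq_six {M : Type*} [Monoid M] {x : M} (h6 : x ^ 6 = 1) (h2 : x ^ 2 ≠ 1)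
    (h3 : x ^ 3 ≠ 1) : orderOf x = 6 := by
  refine orderOf_eq_of_pow_and_pow_div_prime (by norm_num) h6 fun p hp hdvd => ?_
  have hp6 : p ≤ 6 := Nat.le_of_dvd (by norm_num) hdvd
  interval_cases p <;> first | assumption | omega | norm_num at hp

namespace DihedralGroup

variable {n : ℕ} {G : Type*} [Group G]

lemma eq_zero_of_map_r_eq_one [NeZero n] {φ : DihedralGroup n →* G}
    (hφ : orderOf (φ (r 1)) = n) {i : ZMod n} (hi : φ (r i) = 1) : i = 0 := by
  rw [← ZMod.natCast_zmod_val i, ← r_one_pow, map_pow, ← orderOf_dvd_iff_pow_eq_one, hφ] at hi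
  exact (ZMod.val_eq_zero i).1 (Nat.eq_zero_of_dvd_of_lt hi (ZMod.val_lt i))

lemma injective_of_orderOf_map_r_one [NeZero n] (hn : 2 < n) {φ : DihedralGroup n →* G}
    (hφ : orderOf (φ (r 1)) = n) : Function.Injective φ := by
  rw [injective_iff_map_eq_one]
  rintro (i | i) hi
  · rw [eq_zero_of_map_r_eq_one hφ hi]
    rfl
  · have hconj : r 1 * sr i * (r 1)⁻¹ = sr (i - 2) := by
      rw [inv_r, r_mul_sr, sr_mul_r]
      ring_nf
    have h2 : φ (r 2) = 1 := by
      rw [show (r 2 : DihedralGroup n) = sr (i - 2) * sr i by rw [sr_mul_sr]; ring_nf,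
        ← hconj]
      simp only [map_mul, map_inv, hi, mul_one, mul_inv_cancel]
    have h2_zero : ((2 : ℕ) : ZMod n) = 0 := eq_zero_of_map_r_eq_one hφ h2
    exact (Nat.not_dvd_of_pos_of_lt two_pos hn ((ZMod.natCast_eq_zero_iff 2 n).1 h2_zero)).elim

end DihedralGroup

namespace Racah

variable (F : Type) [Field F]

open Matrix in
def matrixGen : RGen → Matrix (Fin 3) (Fin 3) F
  | .A => single 0 1 2
  | .B => single 1 2 1
  | .C => -single 0 1 2 - single 1 2 1
  | .D => single 0 2 1

def matrixRep : R F →ₐ[F] Matrix (Fin 3) (Fin 3) F :=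
  RingQuot.liftAlgHom F ⟨FreeAlgebra.lift F (matrixGen F), by
    intro x y h
    induction h with
    | AB | BC | CA =>
      ext i j
      fin_cases i <;> fin_cases j <;>
        simp [fA, fB, fC, fD, matrixGen, Matrix.mul_apply, Fin.sum_univ_three, map_ofNat,
          Matrix.ofNat_apply]
    | cen c x hc hx =>
      -- the images are strictly upper triangular, so both sides are products of three: zero
      rcases hc with rfl | rfl | rfl <;> rcases hx with rfl | rfl | rfl | rfl <;>
        simp [fAl, fBe, fGa, fA, fB, fC, fD, matrixGen, mul_sub, sub_mul, mul_add, add_mul,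
          Matrix.single_mul_single_same, Matrix.single_mul_single_of_ne]⟩

lemma matrixRep_A : matrixRep F (A F) = Matrix.single 0 1 2 := by
  simp [matrixRep, A, fA, RingQuot.liftAlgHom_mkAlgHom_apply, matrixGen]

lemma matrixRep_B : matrixRep F (B F) = Matrix.single 1 2 1 := by
  simp [matrixRep, B, fB, RingQuot.liftAlgHom_mkAlgHom_apply, matrixGen]

lemma matrixRep_C : matrixRep F (C F) = -Matrix.single 0 1 2 - Matrix.single 1 2 1 := by
  simp [matrixRep, C, fC, RingQuot.liftAlgHom_mkAlgHom_apply, matrixGen]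

lemma A_ne_C : A F ≠ C F := fun h => by
  have h12 := congrFun (congrFun (congrArg (matrixRep F) h) 1) 2
  simp [matrixRep_A, matrixRep_C] at h12

variable {F}

lemma A_mul_B_ne_B_mul_A (h2 : (2 : F) ≠ 0) : A F * B F ≠ B F * A F := fun h => by
  have h02 := congrFun (congrFun (congrArg (matrixRep F) h) 0) 2
  simp [matrixRep_A, matrixRep_B, h2] at h02

variable {T : R F ≃ₗ[F] R F}

lemma sq_ne_one_of_cycle (hA : T (A F) = B F) (hB : T (B F) = C F) : T ^ 2 ≠ 1 := fun h => by
  have hA2 : T (T (A F)) = A F := LinearEquiv.congr_fun (pow_two T ▸ h) (A F)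
  rw [hA, hB] at hA2
  exact A_ne_C F hA2.symm

lemma pow_three_ne_one_of_cycle (h2 : (2 : F) ≠ 0) (hmul : ∀ x y, T (x * y) = T y * T x)
    (hA : T (A F) = B F) (hB : T (B F) = C F) (hC : T (C F) = A F) : T ^ 3 ≠ 1 := fun h => by
  have hAB : T (T (T (A F * B F))) = A F * B F :=
    LinearEquiv.congr_fun (pow_three T ▸ h) (A F * B F)
  rw [hmul, hA, hB, hmul, hB, hC, hmul, hC, hA] at hAB
  exact A_mul_B_ne_B_mul_A h2 hAB.symm

end Racah

open Racah in
theorem stmt6_general (F : Type) [Field F] (h2 : (2 : F) ≠ 0)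
    (T : Racah.R F ≃ₗ[F] Racah.R F)
    (hT : IsAntiAut F T ∧ T (Racah.A F) = Racah.B F ∧ T (Racah.B F) = Racah.C F ∧
      T (Racah.C F) = Racah.A F)
    (φ : DihedralGroup 6 →* (Racah.R F ≃ₗ[F] Racah.R F))
    (hτ : φ (DihedralGroup.r (1 : ZMod 6)) = T) :
    Function.Injective φ ∧ orderOf T = 6 := by
  obtain ⟨⟨-, hmul⟩, hA, hB, hC⟩ := hT
  have hT6 : T ^ 6 = 1 := by
    have h := orderOf_map_dvd φ (DihedralGroup.r 1)
    rwa [DihedralGroup.orderOf_r_one, hτ, orderOf_dvd_iff_pow_eq_one] at h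
  have hord : orderOf T = 6 := orderOf_eq_six hT6 (sq_ne_one_of_cycle hA hB)
    (pow_three_ne_one_of_cycle h2 hmul hA hB hC)
  exact ⟨DihedralGroup.injective_of_orderOf_map_r_one (by norm_num) (hτ ▸ hord), hord⟩

open Racah in
/-- the group homomorphism D₆ → (F-linear bijections of ℜ) determined by
σ ↦ 𝒮 and τ ↦ 𝒯 is injective; equivalently, 𝒯 has order exactly 6. -/
theorem stmt6 (F : Type) [Field F] (h2 : (2 : F) ≠ 0)
    (S T : Racah.R F ≃ₗ[F] Racah.R F)
    (hS : IsAntiAut F S ∧ S (Racah.A F) = Racah.B F ∧ S (Racah.B F) = Racah.A F ∧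
      S (Racah.C F) = Racah.C F ∧ S (Racah.D F) = Racah.D F)
    (hT : IsAntiAut F T ∧ T (Racah.A F) = Racah.B F ∧ T (Racah.B F) = Racah.C F ∧
      T (Racah.C F) = Racah.A F)
    (φ : DihedralGroup 6 →* (Racah.R F ≃ₗ[F] Racah.R F))
    (hσ : φ (DihedralGroup.sr (0 : ZMod 6)) = S)
    (hτ : φ (DihedralGroup.r (1 : ZMod 6)) = T) :
    Function.Injective φ ∧ orderOf T = 6 :=
  stmt6_general F h2 T hT φ hτ
end
end

section
/- For each n ∈ ℕ, the cosets A^i D^j B^k α^r δ^s β^t + ℜ_{n−1}, for all i, j, k, r, s, t ∈ ℕ with i + 2j + k + r + s + t = n, form an F-vector-space basis of the quotient vector space ℜ_n/ℜ_{n−1} (with ℜ_{−1} = 0). -/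
noncomputable section

namespace Racah

variable (F : Type) [Field F]

/-- The monomial `A^i D^j B^k α^r δ^s β^t`. -/
def mon (i j k r s t : ℕ) : R F :=
  A F ^ i * D F ^ j * B F ^ k * al F ^ r * de F ^ s * be F ^ t

end Racah

namespace Racah

variable (F : Type) [Field F]

/-- The subspace ℜ_n of ℜ spanned by the monomials `A^i D^j B^k α^r δ^s β^t`
with `i + 2j + k + r + s + t ≤ n`. -/
def Rn (n : ℕ) : Submodule F (R F) :=
  Submodule.span F
    {x : R F | ∃ i j k r s t : ℕ, i + 2 * j + k + r + s + t ≤ n ∧ x = mon F i j k r s t}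

end Racah

namespace Racah

/-- The degree `i + 2j + k + r + s + t` of the index `(i,j,k,r,s,t)`. -/
def deg (v : ℕ × ℕ × ℕ × ℕ × ℕ × ℕ) : ℕ :=
  v.1 + 2 * v.2.1 + v.2.2.1 + v.2.2.2.1 + v.2.2.2.2.1 + v.2.2.2.2.2

/-- The monomial indexed by `(i,j,k,r,s,t)`. -/
def monv (F : Type) [Field F] (v : ℕ × ℕ × ℕ × ℕ × ℕ × ℕ) : R F :=
  mon F v.1 v.2.1 v.2.2.1 v.2.2.2.1 v.2.2.2.2.1 v.2.2.2.2.2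

/-- ℜ_{n−1}, with the convention ℜ_{−1} = 0. -/
def Rlt (F : Type) [Field F] : ℕ → Submodule F (R F)
  | 0 => ⊥
  | n + 1 => Rn F n

end Racah

/-!
Since `ℜ_n` is spanned by the monomials of degree `≤ n`, the theorem reduces to the linear
independence of all monomials `A^i D^j B^k α^r δ^s β^t` in `ℜ`. To see it, let `ℜ` act on the free
`F[xα, xδ, xβ]`-module with basis `e_{ijk}`: `A` raises `i`, `α, δ, β` act as `xα, xδ, xβ`,
`C = δ - A - B`, and `B`, `D` are defined on `e_{ijk}` by recursion, reading the straightening rules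
`BA = AB - 2D`, `DA = AD - α + δA - A² - AB - BA` and (on `e_{0jk}`)
`BD = β + DB - BA + δB - AB - B²` from left to right. All defining relations of `ℜ` then hold
by construction except that the `β`-expression acts as `xβ` on every `e_{ijk}`, not only on the
`e_{0jk}`; this follows because the first two rules make it commute with `A`. In this
representation the monomial `A^i D^j B^k α^r δ^s β^t` sends `e_{000}` to
`xα^r xδ^s xβ^t e_{ijk}`, and these vectors are linearly independent over `F`.
-/

open Submodule Set in
theorem exists_basis_quotient_span_image {R M ι : Type*} [Ring R] [AddCommGroup M] [Module R M]
    {v : ι → M} (hv : LinearIndependent R v) {s u : Set ι} (hsu : Disjoint s u) :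
    ∃ b : Module.Basis u R
        (span R (v '' (s ∪ u)) ⧸ (span R (v '' s)).comap (span R (v '' (s ∪ u))).subtype),
      ∀ (i : u) (h : v i ∈ span R (v '' (s ∪ u))), b i = Submodule.Quotient.mk ⟨v i, h⟩ := by
  set W := span R (v '' (s ∪ u))
  set W' := (span R (v '' s)).comap W.subtype
  have hmem : ∀ i ∈ s ∪ u, v i ∈ W := fun i hi => subset_span (mem_image_of_mem v hi)
  let f : u → W := fun i => ⟨v i, hmem i (Or.inr i.2)⟩
  have hf : LinearIndependent R f := .of_comp W.subtype (hv.comp _ Subtype.val_injective)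
  have hli : LinearIndependent R (W'.mkQ ∘ f) := by
    refine hf.map (disjoint_def.mpr fun x hx hx' => ?_)
    have hxu : (x : M) ∈ span R (v '' u) := by
      have := mem_map_of_mem (f := W.subtype) hx
      rw [map_span, ← range_comp] at this
      rwa [image_eq_range]
    rw [ker_mkQ] at hx'
    exact Subtype.ext (disjoint_def.mp (hv.disjoint_span_image hsu) _ hx' hxu)
  have hsp : ⊤ ≤ span R (range (W'.mkQ ∘ f)) := by
    rw [← range_mkQ W', LinearMap.range_eq_map, ← span_span_coe_preimage, map_span, span_le]
    rintro _ ⟨y, ⟨i, hi, hyi⟩, rfl⟩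
    rcases hi with hi | hi
    · have : (y : M) ∈ span R (v '' s) := hyi ▸ subset_span (mem_image_of_mem v hi)
      simp [(Quotient.mk_eq_zero W').mpr this]
    · exact subset_span ⟨⟨i, hi⟩, by simp [f, W', hyi]⟩
  exact ⟨.mk hli hsp, fun i _ => Module.Basis.mk_apply hli hsp i⟩

/- Here `a, b, d` stand for `A, B, D`, `x` for `α`, `y` for `δ` and `y - a - b` for `C`;
`hba` and `hda` are the first two straightening rules. -/
namespace Racah.Straightening

variable {S : Type*} [Ring S] {a b d x y z : S}

lemma ab_sub_ba (hba : b * a = a * b - 2 * d) : a * b - b * a = 2 * d := by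
  linear_combination (norm := noncomm_ring) -hba

lemma bc_sub_cb (hba : b * a = a * b - 2 * d) (hyb : Commute y b) :
    b * (y - a - b) - (y - a - b) * b = 2 * d := by
  linear_combination (norm := noncomm_ring) -hba - hyb.eq

lemma ca_sub_ac (hba : b * a = a * b - 2 * d) (hya : Commute y a) :
    (y - a - b) * a - a * (y - a - b) = 2 * d := by
  linear_combination (norm := noncomm_ring) hya.eq - hba

lemma alpha_eq (hda : d * a = a * d - x + y * a - a * a - a * b - b * a) (hya : Commute y a) :
    a * d - d * a + a * (y - a - b) - b * a = x := by
  linear_combination (norm := noncomm_ring) -hda - hya.eq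

lemma commute_beta (hba : b * a = a * b - 2 * d)
    (hda : d * a = a * d - x + y * a - a * a - a * b - b * a)
    (hxb : Commute x b) (hya : Commute y a) (hyb : Commute y b) :
    Commute a (b * d - d * b + b * a - (y - a - b) * b) := by
  rw [Commute, SemiconjBy]
  linear_combination (norm := noncomm_ring)
    -(b * hda + hba * d - d * hba - hda * b + hxb.eq - hyb.eq * a - hya.eq * b)

lemma gamma_eq (hda : d * a = a * d - x + y * a - a * a - a * b - b * a) (hya : Commute y a)
    (hyd : Commute y d) (hβ : b * d - d * b + b * a - (y - a - b) * b = z) :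
    (y - a - b) * d - d * (y - a - b) + (y - a - b) * b - a * (y - a - b) = -x - z := by
  linear_combination (norm := noncomm_ring) hyd.eq - alpha_eq hda hya - hβ

end Racah.Straightening

namespace Racah.Rep

section Construction

variable (K : Type) [CommRing K]

abbrev Pol := MvPolynomial (Fin 3) K
abbrev Space := (ℕ × ℕ × ℕ) →₀ Pol K
abbrev Op := Module.End (Pol K) (Space K)

def xα : Pol K := MvPolynomial.X 0
def xδ : Pol K := MvPolynomial.X 1
def xβ : Pol K := MvPolynomial.X 2

def wdeg (v : ℕ × ℕ × ℕ) : ℕ := v.1 + 2 * v.2.1 + v.2.2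

def lowDeg (d : ℕ) : Submodule (Pol K) (Space K) :=
  Finsupp.supported (Pol K) (Pol K) {v | wdeg v ≤ d}

def opA : Op K := Finsupp.lmapDomain (Pol K) (Pol K) fun v => (v.1 + 1, v.2.1, v.2.2)

variable {K} in
def lowPart (d : ℕ) (f : {v // wdeg v ≤ d} → Space K) : ℕ × ℕ × ℕ → Space K :=
  Function.extend Subtype.val f 0

/- `vecs v = (B e_v, D e_v)`. The clause for `v = (0, j + 1, k)` applies `B` and `D` to the
vector `B e_{0jk}`; `lowPart` cuts these nested calls off above the degree where they are well
founded, which loses nothing by `vec_mem_lowDeg`. -/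
def vecs : ℕ × ℕ × ℕ → Space K × Space K
  | (0, 0, k) => (Finsupp.single (0, 0, k + 1) 1, Finsupp.single (0, 1, k) 1)
  | (0, j + 1, k) =>
      let b := (vecs (0, j, k)).1
      (Finsupp.linearCombination (Pol K) (lowPart (wdeg (0, j, k) + 1) fun u => (vecs u.1).2) b
        + xβ K • Finsupp.single (0, j, k) 1 + xδ K • b
        - Finsupp.linearCombination (Pol K) (lowPart (wdeg (0, j, k) + 1) fun u => (vecs u.1).1) b
        - opA K b - (vecs (1, j, k)).1,
      Finsupp.single (0, j + 2, k) 1)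
  | (i + 1, j, k) =>
      let b := (vecs (i, j, k)).1
      let d := (vecs (i, j, k)).2
      let b' := opA K b - 2 • d
      (b', opA K d - xα K • Finsupp.single (i, j, k) 1 + xδ K • Finsupp.single (i + 1, j, k) 1
        - Finsupp.single (i + 2, j, k) 1 - opA K b - b')
termination_by v => wdeg v
decreasing_by all_goals grind [wdeg]

def bVec (v : ℕ × ℕ × ℕ) : Space K := (vecs K v).1
def dVec (v : ℕ × ℕ × ℕ) : Space K := (vecs K v).2

def opB : Op K := Finsupp.linearCombination (Pol K) (bVec K)
def opD : Op K := Finsupp.linearCombination (Pol K) (dVec K)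
def opC : Op K := algebraMap (Pol K) (Op K) (xδ K) - opA K - opB K
def betaOp : Op K := opB K * opD K - opD K * opB K + opB K * opA K - opC K * opB K

end Construction

variable {K : Type} [CommRing K]

section Equations

lemma bVec_zero_zero (k : ℕ) : bVec K (0, 0, k) = Finsupp.single (0, 0, k + 1) 1 := by
  rw [bVec, vecs]

lemma dVec_zero (j k : ℕ) : dVec K (0, j, k) = Finsupp.single (0, j + 1, k) 1 := by
  cases j <;> rw [dVec, vecs]

lemma bVec_zero_succ_lowPart (j k : ℕ) :
    bVec K (0, j + 1, k) =
      Finsupp.linearCombination (Pol K) (lowPart (wdeg (0, j, k) + 1) fun u => dVec K u.1)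
          (bVec K (0, j, k))
        + xβ K • Finsupp.single (0, j, k) 1 + xδ K • bVec K (0, j, k)
        - Finsupp.linearCombination (Pol K) (lowPart (wdeg (0, j, k) + 1) fun u => bVec K u.1)
          (bVec K (0, j, k))
        - opA K (bVec K (0, j, k)) - bVec K (1, j, k) := by
  rw [bVec, vecs]
  rfl

lemma bVec_succ (i j k : ℕ) :
    bVec K (i + 1, j, k) = opA K (bVec K (i, j, k)) - 2 • dVec K (i, j, k) := by
  rw [bVec, vecs]
  rfl

lemma dVec_succ (i j k : ℕ) :
    dVec K (i + 1, j, k) = opA K (dVec K (i, j, k)) - xα K • Finsupp.single (i, j, k) 1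
      + xδ K • Finsupp.single (i + 1, j, k) 1 - Finsupp.single (i + 2, j, k) 1
      - opA K (bVec K (i, j, k)) - bVec K (i + 1, j, k) := by
  rw [bVec_succ, dVec, vecs]
  rfl

end Equations

section Degree

lemma lowDeg_mono {d e : ℕ} (h : d ≤ e) : lowDeg K d ≤ lowDeg K e :=
  Finsupp.supported_mono fun _ hv => le_trans hv h

lemma single_mem_lowDeg {v : ℕ × ℕ × ℕ} {d : ℕ} (h : wdeg v ≤ d) (p : Pol K) :
    Finsupp.single v p ∈ lowDeg K d :=
  Finsupp.single_mem_supported _ _ h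

lemma opA_mem_lowDeg {x : Space K} {d : ℕ} (hx : x ∈ lowDeg K d) :
    opA K x ∈ lowDeg K (d + 1) := by
  refine Finsupp.supported_mono ?_ ((Finsupp.lmapDomain_supported _ _ _ _).le ⟨x, hx, rfl⟩)
  rintro _ ⟨v, hv, rfl⟩
  simp only [Set.mem_ofPred_eq, wdeg] at hv ⊢
  omega

lemma linearCombination_mem_lowDeg {f : ℕ × ℕ × ℕ → Space K} {x : Space K} {d e : ℕ}
    (hx : x ∈ lowDeg K d) (hf : ∀ v, wdeg v ≤ d → f v ∈ lowDeg K e) :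
    Finsupp.linearCombination (Pol K) f x ∈ lowDeg K e := by
  have hspan : Finsupp.linearCombination (Pol K) f x ∈
      Submodule.span (Pol K) (f '' {v | wdeg v ≤ d}) := by
    rw [Finsupp.span_image_eq_map_linearCombination]
    exact ⟨x, hx, rfl⟩
  exact Submodule.span_le.mpr (by rintro _ ⟨v, hv, rfl⟩; exact hf v hv) hspan

lemma linearCombination_lowPart {d : ℕ} {x : Space K} (hx : x ∈ lowDeg K d)
    (f : ℕ × ℕ × ℕ → Space K) :
    Finsupp.linearCombination (Pol K) (lowPart d fun u => f u.1) x =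
      Finsupp.linearCombination (Pol K) f x := by
  simp only [Finsupp.linearCombination_apply]
  refine Finsupp.sum_congr fun v hv => ?_
  exact congrArg _ (Subtype.val_injective.extend_apply (fun u => f u.1) 0 ⟨v, hx hv⟩)

lemma bVec_mem_lowDeg_of_forall_lt (v : ℕ × ℕ × ℕ)
    (ih : ∀ u, wdeg u < wdeg v →
      bVec K u ∈ lowDeg K (wdeg u + 1) ∧ dVec K u ∈ lowDeg K (wdeg u + 2)) :
    bVec K v ∈ lowDeg K (wdeg v + 1) := by
  obtain ⟨_ | i, j, k⟩ := v
  · cases j with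
    | zero =>
      rw [bVec_zero_zero]
      exact single_mem_lowDeg (by grind [wdeg]) _
    | succ j =>
      have hb := (ih (0, j, k) (by grind [wdeg])).1
      rw [bVec_zero_succ_lowPart, linearCombination_lowPart hb, linearCombination_lowPart hb]
      refine sub_mem (sub_mem (sub_mem (add_mem (add_mem ?_ ?_) ?_) ?_) ?_) ?_
      · refine linearCombination_mem_lowDeg hb fun u hu => lowDeg_mono ?_ (ih u ?_).2 <;>
          grind [wdeg]
      · exact Submodule.smul_mem _ _ (single_mem_lowDeg (by grind [wdeg]) _)
      · exact Submodule.smul_mem _ _ (lowDeg_mono (by grind [wdeg]) hb)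
      · refine linearCombination_mem_lowDeg hb fun u hu => lowDeg_mono ?_ (ih u ?_).1 <;>
          grind [wdeg]
      · exact lowDeg_mono (by grind [wdeg]) (opA_mem_lowDeg hb)
      · exact lowDeg_mono (by grind [wdeg]) (ih (1, j, k) (by grind [wdeg])).1
  · have hlt : wdeg (i, j, k) < wdeg (i + 1, j, k) := by grind [wdeg]
    rw [bVec_succ]
    exact sub_mem (lowDeg_mono (by grind [wdeg]) (opA_mem_lowDeg (ih _ hlt).1))
      (Submodule.smul_of_tower_mem _ _ (lowDeg_mono (by grind [wdeg]) (ih _ hlt).2))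

lemma dVec_mem_lowDeg_of_forall_lt (v : ℕ × ℕ × ℕ)
    (ih : ∀ u, wdeg u < wdeg v →
      bVec K u ∈ lowDeg K (wdeg u + 1) ∧ dVec K u ∈ lowDeg K (wdeg u + 2))
    (hb : bVec K v ∈ lowDeg K (wdeg v + 1)) :
    dVec K v ∈ lowDeg K (wdeg v + 2) := by
  obtain ⟨_ | i, j, k⟩ := v
  · rw [dVec_zero]
    exact single_mem_lowDeg (by grind [wdeg]) _
  · have hlt : wdeg (i, j, k) < wdeg (i + 1, j, k) := by grind [wdeg]
    rw [dVec_succ]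
    refine sub_mem (sub_mem (sub_mem (add_mem (sub_mem ?_ ?_) ?_) ?_) ?_) ?_
    · exact lowDeg_mono (by grind [wdeg]) (opA_mem_lowDeg (ih _ hlt).2)
    · exact Submodule.smul_mem _ _ (single_mem_lowDeg (by grind [wdeg]) _)
    · exact Submodule.smul_mem _ _ (single_mem_lowDeg (by grind [wdeg]) _)
    · exact single_mem_lowDeg (by grind [wdeg]) _
    · exact lowDeg_mono (by grind [wdeg]) (opA_mem_lowDeg (ih _ hlt).1)
    · exact lowDeg_mono (by omega) hb

lemma vec_mem_lowDeg (v : ℕ × ℕ × ℕ) :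
    bVec K v ∈ lowDeg K (wdeg v + 1) ∧ dVec K v ∈ lowDeg K (wdeg v + 2) := by
  induction h : wdeg v using Nat.strong_induction_on generalizing v with
  | _ w ih =>
    have ih' : ∀ u, wdeg u < wdeg v → _ := fun u hu => ih _ (h ▸ hu) u rfl
    have hb := bVec_mem_lowDeg_of_forall_lt v ih'
    exact h ▸ ⟨hb, dVec_mem_lowDeg_of_forall_lt v ih' hb⟩

end Degree

section Relations

lemma bVec_zero_succ (j k : ℕ) :
    bVec K (0, j + 1, k) = opD K (bVec K (0, j, k)) + xβ K • Finsupp.single (0, j, k) 1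
      + xδ K • bVec K (0, j, k) - opB K (bVec K (0, j, k)) - opA K (bVec K (0, j, k))
      - bVec K (1, j, k) := by
  have hb := (vec_mem_lowDeg (K := K) (0, j, k)).1
  rw [bVec_zero_succ_lowPart, linearCombination_lowPart hb, linearCombination_lowPart hb]
  rfl

lemma opA_single (i j k : ℕ) (p : Pol K) :
    opA K (Finsupp.single (i, j, k) p) = Finsupp.single (i + 1, j, k) p :=
  Finsupp.mapDomain_single

lemma opB_single (v : ℕ × ℕ × ℕ) (p : Pol K) : opB K (Finsupp.single v p) = p • bVec K v :=
  Finsupp.linearCombination_single _ _ _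

lemma opD_single (v : ℕ × ℕ × ℕ) (p : Pol K) : opD K (Finsupp.single v p) = p • dVec K v :=
  Finsupp.linearCombination_single _ _ _

lemma opB_mul_opA : opB K * opA K = opA K * opB K - 2 * opD K := by
  refine Finsupp.basisSingleOne.ext fun ⟨i, j, k⟩ => ?_
  simp [opA_single, opB_single, opD_single, bVec_succ]

lemma opD_mul_opA : opD K * opA K = opA K * opD K - algebraMap (Pol K) (Op K) (xα K)
    + algebraMap (Pol K) (Op K) (xδ K) * opA K - opA K * opA K - opA K * opB K
    - opB K * opA K := by
  refine Finsupp.basisSingleOne.ext fun ⟨i, j, k⟩ => ?_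
  simp [opA_single, opB_single, opD_single, dVec_succ]

lemma commute_opA_betaOp : Commute (opA K) (betaOp K) := by
  rw [betaOp, opC]
  exact Straightening.commute_beta (S := Op K) opB_mul_opA opD_mul_opA
    (Algebra.commute_algebraMap_left _ _) (Algebra.commute_algebraMap_left _ _)
    (Algebra.commute_algebraMap_left _ _)

lemma betaOp_single_zero (j k : ℕ) :
    betaOp K (Finsupp.single (0, j, k) 1) = xβ K • Finsupp.single (0, j, k) 1 := by
  simp only [betaOp, opC, Module.End.mul_apply, LinearMap.sub_apply, LinearMap.add_apply,
    Module.algebraMap_end_apply, opB_single, opD_single, opA_single, one_smul, dVec_zero,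
    bVec_zero_succ]
  abel

lemma betaOp_eq : betaOp K = algebraMap (Pol K) (Op K) (xβ K) := by
  refine Finsupp.basisSingleOne.ext fun ⟨i, j, k⟩ => ?_
  simp only [Finsupp.coe_basisSingleOne, Module.algebraMap_end_apply]
  induction i with
  | zero => exact betaOp_single_zero j k
  | succ i ih =>
    rw [← opA_single, ← Module.End.mul_apply, ← commute_opA_betaOp.eq, Module.End.mul_apply, ih,
      map_smul, opA_single]

end Relations

section Monomials

lemma opA_pow_single (n i j k : ℕ) (p : Pol K) :
    (opA K ^ n) (Finsupp.single (i, j, k) p) = Finsupp.single (i + n, j, k) p := by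
  induction n with
  | zero => simp
  | succ n ih => rw [pow_succ', Module.End.mul_apply, ih, opA_single]; rfl

lemma opD_pow_single (n j k : ℕ) (p : Pol K) :
    (opD K ^ n) (Finsupp.single (0, j, k) p) = Finsupp.single (0, j + n, k) p := by
  induction n with
  | zero => simp
  | succ n ih =>
    rw [pow_succ', Module.End.mul_apply, ih, opD_single, dVec_zero, Finsupp.smul_single_one]
    rfl

lemma opB_pow_single (n k : ℕ) (p : Pol K) :
    (opB K ^ n) (Finsupp.single (0, 0, k) p) = Finsupp.single (0, 0, k + n) p := by
  induction n with
  | zero => simp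
  | succ n ih =>
    rw [pow_succ', Module.End.mul_apply, ih, opB_single, bVec_zero_zero, Finsupp.smul_single_one]
    rfl

lemma linearIndependent_single_monomial :
    LinearIndependent K fun v : ℕ × ℕ × ℕ × ℕ × ℕ × ℕ =>
      (Finsupp.single (v.1, v.2.1, v.2.2.1)
        (xα K ^ v.2.2.2.1 * xδ K ^ v.2.2.2.2.1 * xβ K ^ v.2.2.2.2.2) : Space K) := by
  let e : ℕ × ℕ × ℕ × ℕ × ℕ × ℕ → Σ _ : ℕ × ℕ × ℕ, Fin 3 →₀ ℕ := fun v =>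
    ⟨(v.1, v.2.1, v.2.2.1),
      Finsupp.single 0 v.2.2.2.1 + Finsupp.single 1 v.2.2.2.2.1 + Finsupp.single 2 v.2.2.2.2.2⟩
  have he : Function.Injective e := by
    rintro ⟨i, j, k, r, s, t⟩ ⟨i', j', k', r', s', t'⟩ h
    simp only [e, Sigma.mk.injEq, Prod.mk.injEq, heq_eq_eq] at h
    obtain ⟨⟨rfl, rfl, rfl⟩, h⟩ := h
    have h0 := DFunLike.congr_fun h 0
    have h1 := DFunLike.congr_fun h 1
    have h2 := DFunLike.congr_fun h 2
    simp at h0 h1 h2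
    simp [h0, h1, h2]
  have hmon (v : ℕ × ℕ × ℕ × ℕ × ℕ × ℕ) :
      xα K ^ v.2.2.2.1 * xδ K ^ v.2.2.2.2.1 * xβ K ^ v.2.2.2.2.2 =
        MvPolynomial.monomial (e v).2 1 := by
    simp [e, xα, xδ, xβ, MvPolynomial.X_pow_eq_monomial, MvPolynomial.monomial_mul]
  simp_rw [hmon]
  have := (Finsupp.basis fun _ => MvPolynomial.basisMonomials (Fin 3) K).linearIndependent.comp e he
  rw [Finsupp.coe_basis] at this
  exact this

end Monomials

variable (F : Type) [Field F]

def repFree : FA F →ₐ[F] Op F :=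
  FreeAlgebra.lift F fun
    | .A => opA F
    | .B => opB F
    | .C => opC F
    | .D => opD F

variable {F}

lemma repFree_fA : repFree F (fA F) = opA F := FreeAlgebra.lift_ι_apply _ _
lemma repFree_fB : repFree F (fB F) = opB F := FreeAlgebra.lift_ι_apply _ _
lemma repFree_fC : repFree F (fC F) = opC F := FreeAlgebra.lift_ι_apply _ _
lemma repFree_fD : repFree F (fD F) = opD F := FreeAlgebra.lift_ι_apply _ _

lemma repFree_fAl : repFree F (fAl F) = algebraMap (Pol F) (Op F) (xα F) := by
  simp only [fAl, map_add, map_sub, map_mul, repFree_fA, repFree_fB, repFree_fC, repFree_fD, opC]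
  exact Straightening.alpha_eq (S := Op F) opD_mul_opA (Algebra.commute_algebraMap_left _ _)

lemma repFree_fBe : repFree F (fBe F) = algebraMap (Pol F) (Op F) (xβ F) := by
  simp only [fBe, map_add, map_sub, map_mul, repFree_fA, repFree_fB, repFree_fC, repFree_fD]
  exact betaOp_eq

lemma repFree_fGa :
    repFree F (fGa F) = -algebraMap (Pol F) (Op F) (xα F) - algebraMap (Pol F) (Op F) (xβ F) := by
  simp only [fGa, map_add, map_sub, map_mul, repFree_fA, repFree_fB, repFree_fC, repFree_fD, opC]
  exact Straightening.gamma_eq (S := Op F) opD_mul_opA (Algebra.commute_algebraMap_left _ _)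
    (Algebra.commute_algebraMap_left _ _) betaOp_eq

lemma repFree_rel ⦃x y : FA F⦄ (h : Rel F x y) : repFree F x = repFree F y := by
  cases h with
  | AB =>
    simp only [map_sub, map_mul, map_ofNat, repFree_fA, repFree_fB, repFree_fD]
    exact Straightening.ab_sub_ba (S := Op F) opB_mul_opA
  | BC =>
    simp only [map_sub, map_mul, map_ofNat, repFree_fB, repFree_fC, repFree_fD, opC]
    exact Straightening.bc_sub_cb (S := Op F) opB_mul_opA (Algebra.commute_algebraMap_left _ _)
  | CA =>
    simp only [map_sub, map_mul, map_ofNat, repFree_fA, repFree_fC, repFree_fD, opC]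
    exact Straightening.ca_sub_ac (S := Op F) opB_mul_opA (Algebra.commute_algebraMap_left _ _)
  | cen c x hc _ =>
    obtain ⟨p, hp⟩ : ∃ p : Pol F, repFree F c = algebraMap (Pol F) (Op F) p := by
      rcases hc with rfl | rfl | rfl
      · exact ⟨_, repFree_fAl⟩
      · exact ⟨_, repFree_fBe⟩
      · exact ⟨-xα F - xβ F, by rw [repFree_fGa, map_sub, map_neg]⟩
    rw [map_mul, map_mul, hp]
    exact Algebra.commutes p (repFree F x)

variable (F) in
def rep : R F →ₐ[F] Op F := RingQuot.liftAlgHom F ⟨repFree F, repFree_rel⟩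

lemma rep_mkAlgHom (x : FA F) : rep F (RingQuot.mkAlgHom F (Rel F) x) = repFree F x :=
  RingQuot.liftAlgHom_mkAlgHom_apply _ _ _ _

lemma rep_A : rep F (A F) = opA F := (rep_mkAlgHom _).trans repFree_fA
lemma rep_B : rep F (B F) = opB F := (rep_mkAlgHom _).trans repFree_fB
lemma rep_C : rep F (C F) = opC F := (rep_mkAlgHom _).trans repFree_fC
lemma rep_D : rep F (D F) = opD F := (rep_mkAlgHom _).trans repFree_fD

lemma rep_al : rep F (al F) = algebraMap (Pol F) (Op F) (xα F) := by
  rw [← repFree_fAl, ← rep_mkAlgHom]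
  simp only [al, fAl, map_add, map_sub, map_mul]
  rfl

lemma rep_be : rep F (be F) = algebraMap (Pol F) (Op F) (xβ F) := by
  rw [← repFree_fBe, ← rep_mkAlgHom]
  simp only [be, fBe, map_add, map_sub, map_mul]
  rfl

lemma rep_de : rep F (de F) = algebraMap (Pol F) (Op F) (xδ F) := by
  rw [de, map_add, map_add, rep_A, rep_B, rep_C, opC]
  abel

lemma rep_mon_apply (i j k r s t : ℕ) :
    rep F (mon F i j k r s t) (Finsupp.single (0, 0, 0) 1)
      = Finsupp.single (i, j, k) (xα F ^ r * xδ F ^ s * xβ F ^ t) := by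
  have h : rep F (mon F i j k r s t) = opA F ^ i * opD F ^ j * opB F ^ k
      * algebraMap (Pol F) (Op F) (xα F ^ r * xδ F ^ s * xβ F ^ t) := by
    simp only [mon, map_mul, map_pow, rep_A, rep_B, rep_D, rep_al, rep_de, rep_be, mul_assoc]
  rw [h]
  simp only [Module.End.mul_apply, Module.algebraMap_end_apply, Finsupp.smul_single_one]
  rw [opB_pow_single, opD_pow_single, opA_pow_single]
  simp

end Racah.Rep

namespace Racah

variable {F : Type} [Field F]

theorem linearIndependent_monv : LinearIndependent F (monv F) := by
  let act := (LinearMap.applyₗ' F (Finsupp.single (0, 0, 0) 1)).comp (Rep.rep F).toLinearMap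
  have hact : act ∘ monv F = fun v => Finsupp.single (v.1, v.2.1, v.2.2.1)
      (Rep.xα F ^ v.2.2.2.1 * Rep.xδ F ^ v.2.2.2.2.1 * Rep.xβ F ^ v.2.2.2.2.2) :=
    funext fun _ => Rep.rep_mon_apply _ _ _ _ _ _
  refine .of_comp act ?_
  rw [hact]
  exact Rep.linearIndependent_single_monomial

lemma Rn_eq_span (n : ℕ) : Rn F n = Submodule.span F (monv F '' {v | deg v ≤ n}) := by
  rw [Rn]
  congr 1
  ext x
  constructor
  · rintro ⟨i, j, k, r, s, t, h, rfl⟩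
    exact ⟨(i, j, k, r, s, t), h, rfl⟩
  · rintro ⟨⟨i, j, k, r, s, t⟩, h, rfl⟩
    exact ⟨i, j, k, r, s, t, h, rfl⟩

lemma Rlt_eq_span (n : ℕ) : Rlt F n = Submodule.span F (monv F '' {v | deg v < n}) := by
  cases n with
  | zero => simp [Rlt]
  | succ n => simp only [Rlt, Rn_eq_span, Nat.lt_succ_iff]

end Racah

open Racah in
theorem stmt15_general (F : Type) [Field F] (n : ℕ) :
    ∃ b : Module.Basis {v : ℕ × ℕ × ℕ × ℕ × ℕ × ℕ // deg v = n} F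
      (@HasQuotient.Quotient (Rn F n) (Submodule F (Rn F n))
        (@Submodule.hasQuotient F (Rn F n) _ (Rn F n).addCommGroup (Rn F n).module)
        ((Rlt F n).comap (Rn F n).subtype)),
      ∀ (v : {v : ℕ × ℕ × ℕ × ℕ × ℕ × ℕ // deg v = n}) (h : monv F v.1 ∈ Rn F n),
        b v = Submodule.Quotient.mk ⟨monv F v.1, h⟩ := by
  have hsplit : {v | deg v ≤ n} = {v | deg v < n} ∪ {v | deg v = n} := by
    ext v
    simp [le_iff_lt_or_eq]
  rw [Rlt_eq_span, Rn_eq_span, hsplit]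
  exact exists_basis_quotient_span_image linearIndependent_monv
    (Set.disjoint_left.mpr fun _ hlt heq => hlt.ne heq)

open Racah in
/-- for each n, the cosets of the monomials `A^i D^j B^k α^r δ^s β^t` with
`i + 2j + k + r + s + t = n` form an F-basis of ℜ_n/ℜ_{n−1} (with ℜ_{−1} = 0). -/
theorem stmt15 (F : Type) [Field F] (h2 : (2 : F) ≠ 0) (n : ℕ) :
    ∃ b : Module.Basis {v : ℕ × ℕ × ℕ × ℕ × ℕ × ℕ // deg v = n} F
      (@HasQuotient.Quotient (Rn F n) (Submodule F (Rn F n))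
        (@Submodule.hasQuotient F (Rn F n) _ (Rn F n).addCommGroup (Rn F n).module)
        ((Rlt F n).comap (Rn F n).subtype)),
      ∀ (v : {v : ℕ × ℕ × ℕ × ℕ × ℕ × ℕ // deg v = n}) (h : monv F v.1 ∈ Rn F n),
        b v = Submodule.Quotient.mk ⟨monv F v.1, h⟩ :=
  stmt15_general F n
end
end
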